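/- Let M₁₁ be an m×m real symmetric positive definite matrix, M₂₂ a q×q real symmetric matrix, M₁₂ an m×q real matrix, and d = (d₁, d₂) ∈ ℝ^{m+q}. Assume the block matrix M(0) = [[M₁₁, M₁₂],[M₁₂ᵀ, M₂₂]] is positive semidefinite, and let λ > ‖M₂₂‖. Define M(λ) = [[M₁₁, M₁₂],[M₁₂ᵀ, M₂₂ − λI]] and L(u,w,λ) = ½(u,w)ᵀM(λ)(u,w) + (u,w)ᵀd + λ/2. Then M(λ) is invertible, and the pair (u*, w*) = −M(λ)⁻¹d is a saddle point of L(·,·,λ): L(u*, w, λ) ≤ L(u*, w*, λ) ≤ L(u, w*, λ) for all u ∈ ℝᵐ and w ∈ ℝ^q, with saddle value L(u*, w*, λ) = −½ dᵀM(λ)⁻¹d + λ/2. -/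

import Mathlib

/-!
Pairing `M(λ)(u, w)` with `(u, −w)` cancels the off-diagonal blocks and leaves
`uᵀM₁₁u + wᵀ(λI − M₂₂)w`, a positive definite form because `λ > ‖M₂₂‖`; hence `M(λ)` is
invertible. As `M(λ)` is symmetric and `M(λ)x* = −d` for `x* = −M(λ)⁻¹d`, completing the square
gives `L(x) = L(x*) + ½(x − x*)ᵀM(λ)(x − x*)`. Moving only `u` this correction is
`½ δuᵀM₁₁δu ≥ 0`, moving only `w` it is `½ δwᵀ(M₂₂ − λI)δw ≤ 0`.
-/

open Matrix

/-- The induced 2-norm (operator norm) of a real matrix, via its action on Euclidean space. -/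
noncomputable def l2n {a b : ℕ} (M : Matrix (Fin a) (Fin b) ℝ) : ℝ :=
  ‖LinearMap.toContinuousLinearMap (Matrix.toEuclideanLin M)‖

/-- The shifted block matrix `M(λ) = [[M₁₁, M₁₂],[M₁₂ᵀ, M₂₂ − λI]]`. -/
noncomputable def Mshift {m q : ℕ} (M11 : Matrix (Fin m) (Fin m) ℝ)
    (M12 : Matrix (Fin m) (Fin q) ℝ) (M22 : Matrix (Fin q) (Fin q) ℝ) (lam : ℝ) :
    Matrix (Fin m ⊕ Fin q) (Fin m ⊕ Fin q) ℝ :=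
  Matrix.fromBlocks M11 M12 M12ᵀ (M22 - lam • (1 : Matrix (Fin q) (Fin q) ℝ))

/-- The Lagrangian `L(u,w,λ) = ½(u,w)ᵀM(λ)(u,w) + (u,w)ᵀd + λ/2`. -/
noncomputable def Lquad {m q : ℕ} (M11 : Matrix (Fin m) (Fin m) ℝ)
    (M12 : Matrix (Fin m) (Fin q) ℝ) (M22 : Matrix (Fin q) (Fin q) ℝ)
    (d : Fin m ⊕ Fin q → ℝ) (lam : ℝ) (u : Fin m → ℝ) (w : Fin q → ℝ) : ℝ :=
  (1 / 2) * (Sum.elim u w ⬝ᵥ (Mshift M11 M12 M22 lam).mulVec (Sum.elim u w)) +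
    Sum.elim u w ⬝ᵥ d + lam / 2

section Quadratic

variable {n : Type*} [Fintype n]

theorem Matrix.PosDef.dotProduct_mulVec_nonneg_real {A : Matrix n n ℝ} (hA : A.PosDef)
    (u : n → ℝ) : 0 ≤ u ⬝ᵥ A *ᵥ u := by
  simpa using hA.posSemidef.dotProduct_mulVec_nonneg u

theorem Matrix.PosDef.eq_zero_of_dotProduct_mulVec_nonpos {A : Matrix n n ℝ} (hA : A.PosDef)
    {u : n → ℝ} (h : u ⬝ᵥ A *ᵥ u ≤ 0) : u = 0 := by
  by_contra hu
  exact (hA.dotProduct_mulVec_pos hu).not_ge (by simpa using h)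

theorem quadratic_eq_add_of_mulVec_eq_neg {A : Matrix n n ℝ} (hA : A.IsSymm) {d x₀ : n → ℝ}
    (hx₀ : A *ᵥ x₀ = -d) (x : n → ℝ) :
    (1 / 2) * (x ⬝ᵥ A *ᵥ x) + x ⬝ᵥ d =
      (1 / 2) * (x₀ ⬝ᵥ A *ᵥ x₀) + x₀ ⬝ᵥ d + (1 / 2) * ((x - x₀) ⬝ᵥ A *ᵥ (x - x₀)) := by
  have hsymm : x₀ ⬝ᵥ A *ᵥ x = x ⬝ᵥ A *ᵥ x₀ := by
    rw [dotProduct_mulVec, ← mulVec_transpose, hA.eq, dotProduct_comm]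
  rw [mulVec_sub, dotProduct_sub, sub_dotProduct, sub_dotProduct, hsymm, hx₀, dotProduct_neg,
    dotProduct_neg]
  ring

theorem mulVec_inv_mulVec [DecidableEq n] {A : Matrix n n ℝ} (hA : IsUnit A) (d : n → ℝ) :
    A *ᵥ (A⁻¹ *ᵥ d) = d := by
  rw [mulVec_mulVec, mul_nonsing_inv _ ((isUnit_iff_isUnit_det A).mp hA), one_mulVec]

theorem quadratic_neg_inv_mulVec [DecidableEq n] {A : Matrix n n ℝ} (hA : IsUnit A) (d : n → ℝ) :
    (1 / 2) * (-(A⁻¹ *ᵥ d) ⬝ᵥ A *ᵥ -(A⁻¹ *ᵥ d)) + -(A⁻¹ *ᵥ d) ⬝ᵥ d =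
      -(1 / 2) * (d ⬝ᵥ A⁻¹ *ᵥ d) := by
  rw [mulVec_neg, mulVec_inv_mulVec hA, dotProduct_neg, neg_dotProduct, neg_neg, dotProduct_comm]
  ring

end Quadratic

section Blocks

variable {m n : Type*} [Fintype m] [Fintype n]

theorem sumElim_dotProduct_fromBlocks_mulVec_sumElim_zero (A : Matrix m m ℝ) (B : Matrix m n ℝ)
    (C : Matrix n m ℝ) (D : Matrix n n ℝ) (u : m → ℝ) :
    Sum.elim u 0 ⬝ᵥ fromBlocks A B C D *ᵥ Sum.elim u 0 = u ⬝ᵥ A *ᵥ u := by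
  simp [fromBlocks_mulVec, sumElim_dotProduct_sumElim]

theorem sumElim_zero_dotProduct_fromBlocks_mulVec_sumElim (A : Matrix m m ℝ) (B : Matrix m n ℝ)
    (C : Matrix n m ℝ) (D : Matrix n n ℝ) (w : n → ℝ) :
    Sum.elim 0 w ⬝ᵥ fromBlocks A B C D *ᵥ Sum.elim 0 w = w ⬝ᵥ D *ᵥ w := by
  simp [fromBlocks_mulVec, sumElim_dotProduct_sumElim]

theorem sumElim_neg_dotProduct_fromBlocks_transpose_mulVec (A : Matrix m m ℝ) (B : Matrix m n ℝ)
    (D : Matrix n n ℝ) (u : m → ℝ) (w : n → ℝ) :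
    Sum.elim u (-w) ⬝ᵥ fromBlocks A B Bᵀ D *ᵥ Sum.elim u w = u ⬝ᵥ A *ᵥ u - w ⬝ᵥ D *ᵥ w := by
  have hcross : w ⬝ᵥ Bᵀ *ᵥ u = u ⬝ᵥ B *ᵥ w := by
    rw [dotProduct_mulVec, vecMul_transpose, dotProduct_comm]
  simp only [fromBlocks_mulVec, Sum.elim_comp_inl, Sum.elim_comp_inr, sumElim_dotProduct_sumElim,
    dotProduct_add, neg_dotProduct, hcross]
  ring

theorem isUnit_fromBlocks_transpose_neg [DecidableEq m] [DecidableEq n] {A : Matrix m m ℝ}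
    {D : Matrix n n ℝ} (hA : A.PosDef) (hD : D.PosDef) (B : Matrix m n ℝ) :
    IsUnit (fromBlocks A B Bᵀ (-D)) := by
  rw [← mulVec_injective_iff_isUnit]
  refine (injective_iff_map_eq_zero (mulVecLin _)).2 fun x hx => ?_
  rw [mulVecLin_apply, ← Sum.elim_comp_inl_inr x] at hx
  have hform := sumElim_neg_dotProduct_fromBlocks_transpose_mulVec A B (-D)
    (x ∘ Sum.inl) (x ∘ Sum.inr)
  rw [hx, dotProduct_zero, neg_mulVec, dotProduct_neg, sub_neg_eq_add] at hform
  have hu := hA.dotProduct_mulVec_nonneg_real (x ∘ Sum.inl)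
  have hw := hD.dotProduct_mulVec_nonneg_real (x ∘ Sum.inr)
  rw [← Sum.elim_comp_inl_inr x,
    hA.eq_zero_of_dotProduct_mulVec_nonpos (u := x ∘ Sum.inl) (by linarith),
    hD.eq_zero_of_dotProduct_mulVec_nonpos (u := x ∘ Sum.inr) (by linarith), Sum.elim_zero_zero]

end Blocks

open scoped RealInnerProductSpace in
theorem dotProduct_mulVec_le_l2n_mul {a : ℕ} (M : Matrix (Fin a) (Fin a) ℝ) (v : Fin a → ℝ) :
    v ⬝ᵥ M *ᵥ v ≤ l2n M * (v ⬝ᵥ v) := by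
  set e : EuclideanSpace ℝ (Fin a) := WithLp.toLp 2 v
  have hform : v ⬝ᵥ M *ᵥ v = ⟪e, toEuclideanLin M e⟫ := by
    rw [dotProduct_comm]; rfl
  have hsq : v ⬝ᵥ v = ‖e‖ ^ 2 := by
    rw [← real_inner_self_eq_norm_sq]; rfl
  have hop : ‖toEuclideanLin M e‖ ≤ l2n M * ‖e‖ :=
    (LinearMap.toContinuousLinearMap (toEuclideanLin M)).le_opNorm e
  rw [hform, hsq]
  calc ⟪e, toEuclideanLin M e⟫ ≤ ‖e‖ * ‖toEuclideanLin M e‖ := real_inner_le_norm _ _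
    _ ≤ ‖e‖ * (l2n M * ‖e‖) := by gcongr
    _ = l2n M * ‖e‖ ^ 2 := by ring

theorem posDef_smul_one_sub_of_l2n_lt {a : ℕ} {M : Matrix (Fin a) (Fin a) ℝ}
    (hM : M.IsHermitian) {lam : ℝ} (hlam : l2n M < lam) : (lam • 1 - M).PosDef := by
  refine .of_dotProduct_mulVec_pos ((isHermitian_one.smul (IsSelfAdjoint.all lam)).sub hM)
    fun v hv => ?_
  have hvv : 0 < v ⬝ᵥ v :=
    lt_of_le_of_ne (by simpa using dotProduct_star_self_nonneg v) (Ne.symm (by simpa using hv))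
  rw [star_trivial, sub_mulVec, smul_mulVec, one_mulVec, dotProduct_sub, dotProduct_smul,
    smul_eq_mul]
  nlinarith [dotProduct_mulVec_le_l2n_mul M v]

section Shifted

variable {m q : ℕ} {M11 : Matrix (Fin m) (Fin m) ℝ} {M12 : Matrix (Fin m) (Fin q) ℝ}
  {M22 : Matrix (Fin q) (Fin q) ℝ} {lam : ℝ}

theorem isSymm_Mshift (hM11 : M11.IsSymm) (hM22 : M22.IsSymm) :
    (Mshift M11 M12 M22 lam).IsSymm :=
  hM11.fromBlocks rfl (hM22.sub (isSymm_one.smul lam))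

theorem isUnit_Mshift (hM11 : M11.PosDef) (hN : (lam • 1 - M22).PosDef) :
    IsUnit (Mshift M11 M12 M22 lam) := by
  rw [Mshift, ← neg_sub]
  exact isUnit_fromBlocks_transpose_neg hM11 hN M12

theorem Lquad_eq_add {d : Fin m ⊕ Fin q → ℝ} (hA : (Mshift M11 M12 M22 lam).IsSymm) {u₀ : Fin m → ℝ} {w₀ : Fin q → ℝ}
    (h : Mshift M11 M12 M22 lam *ᵥ Sum.elim u₀ w₀ = -d) (u : Fin m → ℝ) (w : Fin q → ℝ) :
    Lquad M11 M12 M22 d lam u w = Lquad M11 M12 M22 d lam u₀ w₀ +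
      (1 / 2) * (Sum.elim (u - u₀) (w - w₀) ⬝ᵥ
        Mshift M11 M12 M22 lam *ᵥ Sum.elim (u - u₀) (w - w₀)) := by
  rw [Lquad, Lquad, quadratic_eq_add_of_mulVec_eq_neg hA h, Sum.elim_sub_sub]
  ring

end Shifted

theorem quadratic_saddle_point_general {m q : ℕ}
    (M11 : Matrix (Fin m) (Fin m) ℝ) (M12 : Matrix (Fin m) (Fin q) ℝ)
    (M22 : Matrix (Fin q) (Fin q) ℝ) (d : Fin m ⊕ Fin q → ℝ) (lam : ℝ)
    (hM11 : M11.PosDef) (hM22 : M22.IsHermitian)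
    (hlam : l2n M22 < lam) :
    IsUnit (Mshift M11 M12 M22 lam) ∧
    (∀ w : Fin q → ℝ,
      Lquad M11 M12 M22 d lam
          (fun i => (-(Mshift M11 M12 M22 lam)⁻¹.mulVec d) (Sum.inl i)) w ≤
        Lquad M11 M12 M22 d lam
          (fun i => (-(Mshift M11 M12 M22 lam)⁻¹.mulVec d) (Sum.inl i))
          (fun j => (-(Mshift M11 M12 M22 lam)⁻¹.mulVec d) (Sum.inr j))) ∧
    (∀ u : Fin m → ℝ,
      Lquad M11 M12 M22 d lam
          (fun i => (-(Mshift M11 M12 M22 lam)⁻¹.mulVec d) (Sum.inl i))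
          (fun j => (-(Mshift M11 M12 M22 lam)⁻¹.mulVec d) (Sum.inr j)) ≤
        Lquad M11 M12 M22 d lam u
          (fun j => (-(Mshift M11 M12 M22 lam)⁻¹.mulVec d) (Sum.inr j))) ∧
    Lquad M11 M12 M22 d lam
        (fun i => (-(Mshift M11 M12 M22 lam)⁻¹.mulVec d) (Sum.inl i))
        (fun j => (-(Mshift M11 M12 M22 lam)⁻¹.mulVec d) (Sum.inr j)) =
      -(1 / 2) * (d ⬝ᵥ (Mshift M11 M12 M22 lam)⁻¹.mulVec d) + lam / 2 := by
  have hN := posDef_smul_one_sub_of_l2n_lt hM22 hlam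
  have hunit : IsUnit (Mshift M11 M12 M22 lam) := isUnit_Mshift hM11 hN
  have hsymm : (Mshift M11 M12 M22 lam).IsSymm :=
    isSymm_Mshift (isHermitian_iff_isSymm.mp hM11.isHermitian) (isHermitian_iff_isSymm.mp hM22)
  set A := Mshift M11 M12 M22 lam
  set x₀ := -(A⁻¹ *ᵥ d)
  set u₀ : Fin m → ℝ := fun i => x₀ (Sum.inl i)
  set w₀ : Fin q → ℝ := fun j => x₀ (Sum.inr j)
  have hx₀ : Sum.elim u₀ w₀ = x₀ := Sum.elim_comp_inl_inr x₀
  have hAx₀ : A *ᵥ Sum.elim u₀ w₀ = -d := by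
    rw [hx₀, mulVec_neg, mulVec_inv_mulVec hunit]
  have hL := Lquad_eq_add hsymm hAx₀
  have hA₁ (v : Fin m → ℝ) : Sum.elim v 0 ⬝ᵥ A *ᵥ Sum.elim v 0 = v ⬝ᵥ M11 *ᵥ v :=
    sumElim_dotProduct_fromBlocks_mulVec_sumElim_zero _ _ _ _ v
  have hA₂ (v : Fin q → ℝ) :
      Sum.elim 0 v ⬝ᵥ A *ᵥ Sum.elim 0 v = -(v ⬝ᵥ (lam • 1 - M22) *ᵥ v) := by
    rw [← dotProduct_neg, ← neg_mulVec, neg_sub]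
    exact sumElim_zero_dotProduct_fromBlocks_mulVec_sumElim _ _ _ _ v
  refine ⟨hunit, fun w => ?_, fun u => ?_, ?_⟩
  · rw [hL _ w, sub_self, hA₂]
    linarith [hN.dotProduct_mulVec_nonneg_real (w - w₀)]
  · rw [hL u, sub_self, hA₁]
    linarith [hM11.dotProduct_mulVec_nonneg_real (u - u₀)]
  · rw [← quadratic_neg_inv_mulVec hunit d, Lquad, hx₀]

/-- **Saddle point of the shifted quadratic Lagrangian.**
If `M(0) ⪰ 0`, `M₁₁ ≻ 0`, `M₂₂` symmetric, and `λ > ‖M₂₂‖`, then `M(λ)` is invertible and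
`(u*, w*) = −M(λ)⁻¹d` is a saddle point of `L(·,·,λ)`, with saddle value
`−½ dᵀM(λ)⁻¹d + λ/2`. -/
theorem quadratic_saddle_point {m q : ℕ}
    (M11 : Matrix (Fin m) (Fin m) ℝ) (M12 : Matrix (Fin m) (Fin q) ℝ)
    (M22 : Matrix (Fin q) (Fin q) ℝ) (d : Fin m ⊕ Fin q → ℝ) (lam : ℝ)
    (hM11 : M11.PosDef) (hM22 : M22.IsHermitian)
    (hM0 : (Matrix.fromBlocks M11 M12 M12ᵀ M22).PosSemidef)
    (hlam : l2n M22 < lam) :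
    IsUnit (Mshift M11 M12 M22 lam) ∧
    (∀ w : Fin q → ℝ,
      Lquad M11 M12 M22 d lam
          (fun i => (-(Mshift M11 M12 M22 lam)⁻¹.mulVec d) (Sum.inl i)) w ≤
        Lquad M11 M12 M22 d lam
          (fun i => (-(Mshift M11 M12 M22 lam)⁻¹.mulVec d) (Sum.inl i))
          (fun j => (-(Mshift M11 M12 M22 lam)⁻¹.mulVec d) (Sum.inr j))) ∧
    (∀ u : Fin m → ℝ,
      Lquad M11 M12 M22 d lam
          (fun i => (-(Mshift M11 M12 M22 lam)⁻¹.mulVec d) (Sum.inl i))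
          (fun j => (-(Mshift M11 M12 M22 lam)⁻¹.mulVec d) (Sum.inr j)) ≤
        Lquad M11 M12 M22 d lam u
          (fun j => (-(Mshift M11 M12 M22 lam)⁻¹.mulVec d) (Sum.inr j))) ∧
    Lquad M11 M12 M22 d lam
        (fun i => (-(Mshift M11 M12 M22 lam)⁻¹.mulVec d) (Sum.inl i))
        (fun j => (-(Mshift M11 M12 M22 lam)⁻¹.mulVec d) (Sum.inr j)) =
      -(1 / 2) * (d ⬝ᵥ (Mshift M11 M12 M22 lam)⁻¹.mulVec d) + lam / 2 :=
  quadratic_saddle_point_general M11 M12 M22 d lam hM11 hM22 hlam
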